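/- Let 0 < C < 1 and t ∈ ℝ. Define the points P(t) = (2tC²/(2C²+t²), t²/(2C²+t²)), H(t) = (2t/(2−C²+t²), (−C²+t²)/(2−C²+t²)), and F = (0, C²/(2−C²)), all lying in the open unit disk. Then dist_BCK(H(t), P(t)) = dist_BCK(P(t), F), and both are equal to arcosh( (C²(2−C²) + (1−C²)t²) / (2C·√((1−C²)(C² + (1−C²)t²)) ) ). (This is the focal distance property of the hyperbolic elliptic parabola x²/C² + 2y² − 2y = 0: its points are equidistant from the focus F and from the directrix horocycle x² + (y−1)((2−C²)y + C²) = 0.) -/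

import Mathlib

noncomputable def arcosh (x : ℝ) : ℝ := Real.log (x + Real.sqrt (x ^ 2 - 1))

/-- The Beltrami--Cayley--Klein model distance between two points of the open unit disk. -/
noncomputable def distBCK (p q : ℝ × ℝ) : ℝ :=
  arcosh ((1 - p.1 * q.1 - p.2 * q.2) /
    (Real.sqrt (1 - p.1 ^ 2 - p.2 ^ 2) * Real.sqrt (1 - q.1 ^ 2 - q.2 ^ 2)))

/-!
Lift points to homogeneous coordinates `(x, y, z)`, `z > 0`, and let `⟪u, v⟫ = z z' - x x' - y y'` be the
Minkowski form. The BCK distance is projectively invariant, `cosh d(u, v) = ⟪u, v⟫ / (√⟪u, u⟫ √⟪v, v⟫)`,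
so with suitable polynomial lifts of `P`, `H`, `F` everything reduces to the identities
`⟪H, H⟫ = ⟪F, F⟫ = 4(1 - C²)` and `⟪H, P⟫ = ⟪P, F⟫ = 2(C²(2 - C²) + (1 - C²)t²)`.
-/

def minkowskiForm (u v : ℝ × ℝ × ℝ) : ℝ := u.2.2 * v.2.2 - u.1 * v.1 - u.2.1 * v.2.1

noncomputable def dehomogenize (u : ℝ × ℝ × ℝ) : ℝ × ℝ := (u.1 / u.2.2, u.2.1 / u.2.2)

lemma one_sub_sq_sub_sq_dehomogenize {u : ℝ × ℝ × ℝ} (hu : u.2.2 ≠ 0) :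
    1 - (dehomogenize u).1 ^ 2 - (dehomogenize u).2 ^ 2 = minkowskiForm u u / u.2.2 ^ 2 := by
  simp only [dehomogenize, minkowskiForm]
  field_simp

lemma one_sub_mul_sub_mul_dehomogenize {u v : ℝ × ℝ × ℝ} (hu : u.2.2 ≠ 0) (hv : v.2.2 ≠ 0) :
    1 - (dehomogenize u).1 * (dehomogenize v).1 - (dehomogenize u).2 * (dehomogenize v).2 =
      minkowskiForm u v / (u.2.2 * v.2.2) := by
  simp only [dehomogenize, minkowskiForm]
  field_simp

lemma dehomogenize_mem_disk {u : ℝ × ℝ × ℝ} (hu : u.2.2 ≠ 0) (hpos : 0 < minkowskiForm u u) :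
    (dehomogenize u).1 ^ 2 + (dehomogenize u).2 ^ 2 < 1 := by
  have h := one_sub_sq_sub_sq_dehomogenize hu
  have : 0 < minkowskiForm u u / u.2.2 ^ 2 := by positivity
  linarith

lemma sqrt_one_sub_sq_sub_sq_dehomogenize {u : ℝ × ℝ × ℝ} (hu : 0 < u.2.2) :
    Real.sqrt (1 - (dehomogenize u).1 ^ 2 - (dehomogenize u).2 ^ 2) =
      Real.sqrt (minkowskiForm u u) / u.2.2 := by
  rw [one_sub_sq_sub_sq_dehomogenize hu.ne', Real.sqrt_div' _ (by positivity),
    Real.sqrt_sq hu.le]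

lemma distBCK_dehomogenize {u v : ℝ × ℝ × ℝ} (hu : 0 < u.2.2) (hv : 0 < v.2.2) :
    distBCK (dehomogenize u) (dehomogenize v) =
      arcosh (minkowskiForm u v /
        (Real.sqrt (minkowskiForm u u) * Real.sqrt (minkowskiForm v v))) := by
  rw [distBCK, one_sub_mul_sub_mul_dehomogenize hu.ne' hv.ne',
    sqrt_one_sub_sq_sub_sq_dehomogenize hu, sqrt_one_sub_sq_sub_sq_dehomogenize hv]
  congr 1
  field_simp

def parabolaLift (C t : ℝ) : ℝ × ℝ × ℝ := (2 * t * C ^ 2, t ^ 2, 2 * C ^ 2 + t ^ 2)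

def directrixLift (C t : ℝ) : ℝ × ℝ × ℝ := (2 * t, -C ^ 2 + t ^ 2, 2 - C ^ 2 + t ^ 2)

def focusLift (C : ℝ) : ℝ × ℝ × ℝ := (0, C ^ 2, 2 - C ^ 2)

lemma minkowskiForm_parabolaLift_self (C t : ℝ) :
    minkowskiForm (parabolaLift C t) (parabolaLift C t) =
      (2 * C) ^ 2 * (C ^ 2 + (1 - C ^ 2) * t ^ 2) := by
  simp only [minkowskiForm, parabolaLift]; ring

lemma minkowskiForm_directrixLift_self (C t : ℝ) :
    minkowskiForm (directrixLift C t) (directrixLift C t) = 2 ^ 2 * (1 - C ^ 2) := by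
  simp only [minkowskiForm, directrixLift]; ring

lemma minkowskiForm_focusLift_self (C : ℝ) :
    minkowskiForm (focusLift C) (focusLift C) = 2 ^ 2 * (1 - C ^ 2) := by
  simp only [minkowskiForm, focusLift]; ring

lemma minkowskiForm_directrixLift_parabolaLift (C t : ℝ) :
    minkowskiForm (directrixLift C t) (parabolaLift C t) =
      2 * (C ^ 2 * (2 - C ^ 2) + (1 - C ^ 2) * t ^ 2) := by
  simp only [minkowskiForm, directrixLift, parabolaLift]; ring

lemma minkowskiForm_parabolaLift_focusLift (C t : ℝ) :
    minkowskiForm (parabolaLift C t) (focusLift C) =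
      2 * (C ^ 2 * (2 - C ^ 2) + (1 - C ^ 2) * t ^ 2) := by
  simp only [minkowskiForm, parabolaLift, focusLift]; ring

theorem focal_distance_property (C t : ℝ) (hC0 : 0 < C) (hC1 : C < 1)
    (P : ℝ × ℝ) (hP : P = (2 * t * C ^ 2 / (2 * C ^ 2 + t ^ 2), t ^ 2 / (2 * C ^ 2 + t ^ 2)))
    (H : ℝ × ℝ) (hH : H = (2 * t / (2 - C ^ 2 + t ^ 2), (-C ^ 2 + t ^ 2) / (2 - C ^ 2 + t ^ 2)))
    (F : ℝ × ℝ) (hF : F = (0, C ^ 2 / (2 - C ^ 2))) :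
    (P.1 ^ 2 + P.2 ^ 2 < 1 ∧ H.1 ^ 2 + H.2 ^ 2 < 1 ∧ F.1 ^ 2 + F.2 ^ 2 < 1) ∧
    distBCK H P = distBCK P F ∧
    distBCK P F =
      arcosh ((C ^ 2 * (2 - C ^ 2) + (1 - C ^ 2) * t ^ 2) /
        (2 * C * Real.sqrt ((1 - C ^ 2) * (C ^ 2 + (1 - C ^ 2) * t ^ 2)))) := by
  obtain rfl : P = dehomogenize (parabolaLift C t) := hP
  obtain rfl : H = dehomogenize (directrixLift C t) := hH
  obtain rfl : F = dehomogenize (focusLift C) := by rw [hF, focusLift, dehomogenize, zero_div]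
  have hC2 : 0 < 1 - C ^ 2 := by nlinarith
  have hX : 0 < C ^ 2 + (1 - C ^ 2) * t ^ 2 := by positivity
  have hp : 0 < (parabolaLift C t).2.2 := by simp only [parabolaLift]; positivity
  have hh : 0 < (directrixLift C t).2.2 := by simp only [directrixLift]; linarith [sq_nonneg t]
  have hf : 0 < (focusLift C).2.2 := by simp only [focusLift]; linarith
  refine ⟨⟨dehomogenize_mem_disk hp.ne' (by rw [minkowskiForm_parabolaLift_self]; positivity),
    dehomogenize_mem_disk hh.ne' (by rw [minkowskiForm_directrixLift_self]; positivity),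
    dehomogenize_mem_disk hf.ne' (by rw [minkowskiForm_focusLift_self]; positivity)⟩, ?_, ?_⟩
  · rw [distBCK_dehomogenize hh hp, distBCK_dehomogenize hp hf,
      minkowskiForm_directrixLift_parabolaLift, minkowskiForm_parabolaLift_focusLift,
      minkowskiForm_directrixLift_self, minkowskiForm_focusLift_self,
      mul_comm (Real.sqrt (2 ^ 2 * _))]
  · rw [distBCK_dehomogenize hp hf, minkowskiForm_parabolaLift_focusLift,
      minkowskiForm_parabolaLift_self, minkowskiForm_focusLift_self, Real.sqrt_mul' _ hX.le,
      Real.sqrt_mul' _ hC2.le, Real.sqrt_sq (by positivity), Real.sqrt_sq (by positivity),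
      Real.sqrt_mul hC2.le]
    congr 1
    field_simp
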